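/- arXiv:2205.03800 — 2 statements merged into one kernel-verified Lean document; each statement's English description precedes it below -/
import Mathlib

section
/- Let φ : 𝔾 → ℝ be the viscosity solution of the Cauchy problem. If φ is ci-differentiable at a point (τ,z,w) ∈ 𝔾_*, then φ satisfies the Hamilton–Jacobi equation at this point, i.e. ∂^{ci}_{τ,w}φ(τ,z,w) + ⟨∂^{ci}_{τ,w} g(τ,w), ∇_z φ(τ,z,w)⟩ + H(τ,z,w(−h), ∇_z φ(τ,z,w)) = 0. -/
open Filter Set MeasureTheory Asymptotics
open scoped InnerProductSpace Topology

noncomputable section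

/-- `ℝⁿ` with the Euclidean inner product. -/
abbrev E (n : ℕ) : Type := EuclideanSpace ℝ (Fin n)

/-- The left limit `w(a - 0)`. -/
def leftLimit {n : ℕ} (w : ℝ → E n) (a : ℝ) : E n :=
  limUnder (nhdsWithin a (Set.Iio a)) w

/-- A function is piecewise Lipschitz on `[a,b)` (or `[a,b]`) if there is a partition
`a = ξ₀ < ξ₁ < … < ξ_k = b` such that it is Lipschitz on every `[ξ_i, ξ_{i+1})`. -/
def PiecewiseLipOn {n : ℕ} (x : ℝ → E n) (a b : ℝ) : Prop :=
  ∃ (k : ℕ) (ξ : ℕ → ℝ), 0 < k ∧ ξ 0 = a ∧ ξ k = b ∧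
    (∀ i < k, ξ i < ξ (i + 1)) ∧
    ∀ i < k, ∃ K, LipschitzOnWith K x (Set.Ico (ξ i) (ξ (i + 1)))

/-- `w ∈ PLip`: piecewise Lipschitz on `[-h, 0)`. -/
def IsPLip {n : ℕ} (h : ℝ) (w : ℝ → E n) : Prop := PiecewiseLipOn w (-h) 0

/-- `w ∈ Lip`: Lipschitz continuous on `[-h, 0)`. -/
def IsLip {n : ℕ} (h : ℝ) (w : ℝ → E n) : Prop :=
  ∃ K, LipschitzOnWith K w (Set.Ico (-h) 0)

/-- `w ∈ C¹`: continuously differentiable on `[-h, 0)` (up to the closure). -/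
def IsC1 {n : ℕ} (h : ℝ) (w : ℝ → E n) : Prop := ContDiffOn ℝ 1 w (Set.Icc (-h) 0)

/-- `w ∈ PLip_*`: piecewise Lipschitz and continuously differentiable on
`[-h, -h+δ]` for some `δ > 0`. -/
def IsPLipStar {n : ℕ} (h : ℝ) (w : ℝ → E n) : Prop :=
  IsPLip h w ∧ ∃ δ > 0, ContDiffOn ℝ 1 w (Set.Icc (-h) (-h + δ))

/-- `‖w‖₁ = ∫_{-h}^0 ‖w(ξ)‖ dξ`. -/
def norm1 {n : ℕ} (h : ℝ) (w : ℝ → E n) : ℝ := ∫ ξ in (-h)..(0:ℝ), ‖w ξ‖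

/-- `‖w‖_∞ = sup_{ξ ∈ [-h,0)} ‖w(ξ)‖`. -/
def normInf {n : ℕ} (h : ℝ) (w : ℝ → E n) : ℝ :=
  ⨆ ξ : Set.Ico (-h) (0:ℝ), ‖w ξ.1‖

/-- `(τ,z,w) ∈ 𝔾 = [0,ϑ] × ℝⁿ × PLip` (the `z`-component is unconstrained). -/
def InG {n : ℕ} (I : ℕ) (h τ : ℝ) (w : ℝ → E n) : Prop :=
  τ ∈ Set.Icc (0:ℝ) ((I:ℝ) * h) ∧ IsPLip h w

/-- `(τ,z,w) ∈ 𝔾_* = ⋃_{i<I} (ih,(i+1)h) × ℝⁿ × PLip_*`. -/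
def InGstar {n : ℕ} (I : ℕ) (h τ : ℝ) (w : ℝ → E n) : Prop :=
  (∃ i : ℕ, i < I ∧ τ ∈ Set.Ioo ((i:ℝ) * h) (((i:ℝ) + 1) * h)) ∧ IsPLipStar h w

/-- `x ∈ Λ(τ,z,w)`. -/
def InLambda {n : ℕ} (I : ℕ) (h τ : ℝ) (z : E n) (w x : ℝ → E n) : Prop :=
  PiecewiseLipOn x (τ - h) ((I:ℝ) * h) ∧ x τ = z ∧
    ∀ t ∈ Set.Ico (τ - h) τ, x t = w (t - τ)

/-- `x ∈ Λ₀(τ,z,w)`: moreover constantly equal to `z` on `[τ,ϑ]`. -/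
def InLambda0 {n : ℕ} (I : ℕ) (h τ : ℝ) (z : E n) (w x : ℝ → E n) : Prop :=
  InLambda I h τ z w x ∧ ∀ t ∈ Set.Icc τ ((I:ℝ) * h), x t = z

/-- `x_t(ξ) = x(t + ξ)`. -/
def shift {n : ℕ} (x : ℝ → E n) (t : ℝ) : ℝ → E n := fun ξ => x (t + ξ)

/-- `(z,w) ∈ P(α)`. -/
def InP {n : ℕ} (h α : ℝ) (z : E n) (w : ℝ → E n) : Prop :=
  IsPLip h w ∧ ‖z‖ ≤ α ∧ normInf h w ≤ α

/-- `υ(τ,z,w) = ‖z‖ + ‖w‖₁ + ‖w(-h)‖ + ‖w(ih - τ)‖` for the `i ∈ {-1,…,I-1}` with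
`τ ∈ (ih, (i+1)h]`, i.e. `i = ⌈τ/h⌉ - 1`. -/
def upsilon {n : ℕ} (h τ : ℝ) (z : E n) (w : ℝ → E n) : ℝ :=
  ‖z‖ + norm1 h w + ‖w (-h)‖ + ‖w (((⌈τ / h⌉ - 1 : ℤ) : ℝ) * h - τ)‖

/-- Condition (φ₁). -/
def Phi1 {n : ℕ} (I : ℕ) (h : ℝ) (φ : ℝ → E n → (ℝ → E n) → ℝ) : Prop :=
  ∀ τ ∈ Set.Icc (0:ℝ) ((I:ℝ) * h), ∀ w : ℝ → E n, IsLip h w →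
    ContinuousOn (fun t => φ t (leftLimit w 0) w) (Set.Icc τ ((I:ℝ) * h))

/-- Condition (φ₂). -/
def Phi2 {n : ℕ} (I : ℕ) (h : ℝ) (φ : ℝ → E n → (ℝ → E n) → ℝ) : Prop :=
  ∀ α > 0, ∃ lam > 0, ∀ τ ∈ Set.Icc (0:ℝ) ((I:ℝ) * h),
    ∀ (z : E n) (w : ℝ → E n) (z' : E n) (w' : ℝ → E n),
      InP h α z w → InP h α z' w' →
        |φ τ z w - φ τ z' w'| ≤ lam * upsilon h τ (z - z') (w - w')

/-- Terminal condition `φ(ϑ,z,w) = σ(z,w)` on `ℝⁿ × PLip`. -/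
def TermCond {n : ℕ} (I : ℕ) (h : ℝ) (σf : E n → (ℝ → E n) → ℝ)
    (φ : ℝ → E n → (ℝ → E n) → ℝ) : Prop :=
  ∀ (z : E n) (w : ℝ → E n), IsPLip h w → φ ((I:ℝ) * h) z w = σf z w

/-- Two functionals agree on `𝔾`. -/
def AgreeOnG {n : ℕ} (I : ℕ) (h : ℝ) (φ φ' : ℝ → E n → (ℝ → E n) → ℝ) : Prop :=
  ∀ (τ : ℝ) (z : E n) (w : ℝ → E n), InG I h τ w → φ τ z w = φ' τ z w

/-- Condition (g): `g` is continuously differentiable on `[0,ϑ] × ℝⁿ`. -/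
def CondG {n : ℕ} (I : ℕ) (h : ℝ) (g : ℝ → E n → E n) : Prop :=
  ContDiffOn ℝ 1 (Function.uncurry g)
    (Set.Icc (0:ℝ) ((I:ℝ) * h) ×ˢ (Set.univ : Set (E n)))

/-- Condition (H₁): continuity. -/
def CondH1 {n : ℕ} (I : ℕ) (h : ℝ) (H : ℝ → E n → E n → E n → ℝ) : Prop :=
  ContinuousOn (fun q : ℝ × E n × E n × E n => H q.1 q.2.1 q.2.2.1 q.2.2.2)
    (Set.Icc (0:ℝ) ((I:ℝ) * h) ×ˢ (Set.univ : Set (E n × E n × E n)))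

/-- Condition (H₂). -/
def CondH2 {n : ℕ} (I : ℕ) (h cH : ℝ) (H : ℝ → E n → E n → E n → ℝ) : Prop :=
  0 < cH ∧ ∀ τ ∈ Set.Icc (0:ℝ) ((I:ℝ) * h), ∀ z r s s' : E n,
    |H τ z r s - H τ z r s'| ≤ cH * (1 + ‖z‖ + ‖r‖) * ‖s - s'‖

/-- Condition (H₃). -/
def CondH3 {n : ℕ} (I : ℕ) (h : ℝ) (H : ℝ → E n → E n → E n → ℝ) : Prop :=
  ∀ α > 0, ∃ lam > 0, ∀ τ ∈ Set.Icc (0:ℝ) ((I:ℝ) * h), ∀ z r z' r' s : E n,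
    ‖z‖ ≤ α → ‖r‖ ≤ α → ‖z'‖ ≤ α → ‖r'‖ ≤ α →
      |H τ z r s - H τ z' r' s| ≤ lam * (‖z - z'‖ + ‖r - r'‖) * (1 + ‖s‖)

/-- Condition (σ). -/
def CondSigma {n : ℕ} (h : ℝ) (σf : E n → (ℝ → E n) → ℝ) : Prop :=
  ∀ α > 0, ∃ lam > 0, ∀ (z : E n) (w : ℝ → E n) (z' : E n) (w' : ℝ → E n),
    InP h α z w → InP h α z' w' →
      |σf z w - σf z' w'| ≤ lam * (‖z - z'‖ + norm1 h (fun ξ => w ξ - w' ξ))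

/-- `∂^{ci}_{τ,w} g(τ,w) = ∂g(τ,w(-h))/∂τ + ∇_x g(τ,w(-h)) · (d⁺w(-h)/dξ)`. -/
def ciDg {n : ℕ} (I : ℕ) (h : ℝ) (g : ℝ → E n → E n) (τ : ℝ) (w : ℝ → E n) : E n :=
  derivWithin (fun t => g t (w (-h))) (Set.Icc (0:ℝ) ((I:ℝ) * h)) τ +
    fderiv ℝ (g τ) (w (-h)) (derivWithin w (Set.Ici (-h)) (-h))

/-- `F^η(x,y) = {l : ‖l‖ ≤ c_H (1 + ‖x‖ + ‖y‖) + η}`. -/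
def Fset {n : ℕ} (cH η : ℝ) (x y : E n) : Set (E n) :=
  {l : E n | ‖l‖ ≤ cH * (1 + ‖x‖ + ‖y‖) + η}

/-- `x ∈ X^η(τ,z,w)`. -/
def InX {n : ℕ} (I : ℕ) (h : ℝ) (g : ℝ → E n → E n) (cH η τ : ℝ) (z : E n)
    (w x : ℝ → E n) : Prop :=
  InLambda I h τ z w x ∧
  (∃ K, LipschitzOnWith K (fun t => x t - g t (x (t - h))) (Set.Icc τ ((I:ℝ) * h))) ∧
  ∀ᵐ t ∂(volume : Measure ℝ), t ∈ Set.Icc τ ((I:ℝ) * h) →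
    ∃ l ∈ Fset cH η (x t) (x (t - h)),
      HasDerivAt (fun r => x r - g r (x (r - h))) l t

/-- `ω(τ,t,x,s)`. -/
def omegaF {n : ℕ} (h : ℝ) (g : ℝ → E n → E n) (H : ℝ → E n → E n → E n → ℝ)
    (τ t : ℝ) (x : ℝ → E n) (s : E n) : ℝ :=
  (∫ ξ in τ..t, H ξ (x ξ) (x (ξ - h)) s) -
    ⟪(x t - g t (x (t - h))) - (x τ - g τ (x (τ - h))), s⟫_ℝ

/-- The upper minimax inequality (U):
`inf_{x ∈ X^η(τ,z,w)} [φ(t,x(t),x_t) + ω(τ,t,x,s)] ≤ φ(τ,z,w)`. -/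
def Uineq {n : ℕ} (I : ℕ) (h : ℝ) (g : ℝ → E n → E n) (H : ℝ → E n → E n → E n → ℝ)
    (cH : ℝ) (φ : ℝ → E n → (ℝ → E n) → ℝ) (τ : ℝ) (z : E n) (w : ℝ → E n)
    (t : ℝ) (s : E n) (η : ℝ) : Prop :=
  ∀ ε > 0, ∃ x : ℝ → E n, InX I h g cH η τ z w x ∧
    φ t (x t) (shift x t) + omegaF h g H τ t x s ≤ φ τ z w + ε

/-- The lower minimax inequality (L):
`sup_{x ∈ X^η(τ,z,w)} [φ(t,x(t),x_t) + ω(τ,t,x,s)] ≥ φ(τ,z,w)`. -/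
def Lineq {n : ℕ} (I : ℕ) (h : ℝ) (g : ℝ → E n → E n) (H : ℝ → E n → E n → E n → ℝ)
    (cH : ℝ) (φ : ℝ → E n → (ℝ → E n) → ℝ) (τ : ℝ) (z : E n) (w : ℝ → E n)
    (t : ℝ) (s : E n) (η : ℝ) : Prop :=
  ∀ ε > 0, ∃ x : ℝ → E n, InX I h g cH η τ z w x ∧
    φ τ z w - ε ≤ φ t (x t) (shift x t) + omegaF h g H τ t x s

/-- Minimax solution of the Cauchy problem. -/
def IsMinimaxSol {n : ℕ} (I : ℕ) (h : ℝ) (g : ℝ → E n → E n)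
    (H : ℝ → E n → E n → E n → ℝ) (cH : ℝ) (σf : E n → (ℝ → E n) → ℝ)
    (φ : ℝ → E n → (ℝ → E n) → ℝ) : Prop :=
  Phi1 I h φ ∧ Phi2 I h φ ∧ TermCond I h σf φ ∧
  ∀ (τ : ℝ) (z : E n) (w : ℝ → E n), InG I h τ w → τ < (I:ℝ) * h →
    ∀ t ∈ Set.Ioc τ ((I:ℝ) * h), ∀ s : E n,
      Uineq I h g H cH φ τ z w t s 0 ∧ Lineq I h g H cH φ τ z w t s 0

/-- Lip-minimax solution of the Cauchy problem. -/
def IsLipMinimaxSol {n : ℕ} (I : ℕ) (h : ℝ) (g : ℝ → E n → E n)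
    (H : ℝ → E n → E n → E n → ℝ) (cH : ℝ) (σf : E n → (ℝ → E n) → ℝ)
    (φ : ℝ → E n → (ℝ → E n) → ℝ) : Prop :=
  Phi1 I h φ ∧ Phi2 I h φ ∧
  (∀ w : ℝ → E n, IsLip h w →
    φ ((I:ℝ) * h) (leftLimit w 0) w = σf (leftLimit w 0) w) ∧
  ∀ τ ∈ Set.Ico (0:ℝ) ((I:ℝ) * h), ∀ w : ℝ → E n, IsLip h w →
    ∀ t ∈ Set.Ioc τ ((I:ℝ) * h), ∀ s : E n,
      Uineq I h g H cH φ τ (leftLimit w 0) w t s 0 ∧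
      Lineq I h g H cH φ τ (leftLimit w 0) w t s 0

/-- C¹-minimax solution of the Cauchy problem. -/
def IsC1MinimaxSol {n : ℕ} (I : ℕ) (h : ℝ) (g : ℝ → E n → E n)
    (H : ℝ → E n → E n → E n → ℝ) (cH : ℝ) (σf : E n → (ℝ → E n) → ℝ)
    (φ : ℝ → E n → (ℝ → E n) → ℝ) : Prop :=
  Phi1 I h φ ∧ Phi2 I h φ ∧
  (∀ w : ℝ → E n, IsC1 h w →
    φ ((I:ℝ) * h) (leftLimit w 0) w = σf (leftLimit w 0) w) ∧
  ∀ i : ℕ, i < I → ∀ τ ∈ Set.Ico ((i:ℝ) * h) (((i:ℝ) + 1) * h),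
    ∀ w : ℝ → E n, IsC1 h w → ∀ t ∈ Set.Ioc τ (((i:ℝ) + 1) * h), ∀ s : E n,
      ∀ η ∈ Set.Ioc (0:ℝ) 1,
        Uineq I h g H cH φ τ (leftLimit w 0) w t s η ∧
        Lineq I h g H cH φ τ (leftLimit w 0) w t s η

/-- `O⁺_δ(τ,z) = {(t,x) ∈ [τ,τ+δ] × ℝⁿ : ‖x - z‖ ≤ δ}`. -/
def OPlus {n : ℕ} (δ τ : ℝ) (z : E n) : Set (ℝ × E n) :=
  {p : ℝ × E n | p.1 ∈ Set.Icc τ (τ + δ) ∧ ‖p.2 - z‖ ≤ δ}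

/-- Viscosity solution of the Cauchy problem. -/
def IsViscositySol {n : ℕ} (I : ℕ) (h : ℝ) (g : ℝ → E n → E n)
    (H : ℝ → E n → E n → E n → ℝ) (σf : E n → (ℝ → E n) → ℝ)
    (φ : ℝ → E n → (ℝ → E n) → ℝ) : Prop :=
  Phi1 I h φ ∧ Phi2 I h φ ∧ TermCond I h σf φ ∧
  (∀ (τ : ℝ) (z : E n) (w : ℝ → E n), InGstar I h τ w →
    ∀ ψ : ℝ → E n → ℝ, ContDiff ℝ 1 (Function.uncurry ψ) →
    ∀ δ > 0, ∀ κ : ℝ → E n, InLambda0 I h τ z w κ →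
    (∀ (t : ℝ) (x : E n), (t, x) ∈ OPlus δ τ z →
        φ τ z w - ψ τ z ≤ φ t x (shift κ t) - ψ t x) →
    deriv (fun r => ψ r z) τ + ⟪ciDg I h g τ w, gradient (ψ τ) z⟫_ℝ +
      H τ z (w (-h)) (gradient (ψ τ) z) ≤ 0) ∧
  (∀ (τ : ℝ) (z : E n) (w : ℝ → E n), InGstar I h τ w →
    ∀ ψ : ℝ → E n → ℝ, ContDiff ℝ 1 (Function.uncurry ψ) →
    ∀ δ > 0, ∀ κ : ℝ → E n, InLambda0 I h τ z w κ →
    (∀ (t : ℝ) (x : E n), (t, x) ∈ OPlus δ τ z →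
        φ t x (shift κ t) - ψ t x ≤ φ τ z w - ψ τ z) →
    0 ≤ deriv (fun r => ψ r z) τ + ⟪ciDg I h g τ w, gradient (ψ τ) z⟫_ℝ +
      H τ z (w (-h)) (gradient (ψ τ) z))

/-- `φ` is ci-differentiable at `(τ,z,w)` with ci-derivative `a` and gradient `p`. -/
def HasCiDeriv {n : ℕ} (I : ℕ) (h : ℝ) (φ : ℝ → E n → (ℝ → E n) → ℝ)
    (τ : ℝ) (z : E n) (w : ℝ → E n) (a : ℝ) (p : E n) : Prop :=
  ∀ x : ℝ → E n, InLambda I h τ z w x →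
    (fun q : ℝ × E n =>
        φ q.1 q.2 (shift x q.1) - φ τ z w - (q.1 - τ) * a - ⟪q.2 - z, p⟫_ℝ)
      =o[nhdsWithin (τ, z) (Set.Icc τ ((I:ℝ) * h) ×ˢ (Set.univ : Set (E n)))]
      fun q : ℝ × E n => |q.1 - τ| + ‖q.2 - z‖

/-- Lower right directional derivative `∂⁻_{(1,l)} φ(τ,z,w)` along `κ ∈ Λ₀`. -/
def dLow {n : ℕ} (φ : ℝ → E n → (ℝ → E n) → ℝ) (τ : ℝ) (z : E n) (w : ℝ → E n)
    (l : E n) (κ : ℝ → E n) : EReal :=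
  Filter.liminf
    (fun δ : ℝ =>
      (((φ (τ + δ) (z + δ • l) (shift κ (τ + δ)) - φ τ z w) / δ : ℝ) : EReal))
    (nhdsWithin 0 (Set.Ioi 0))

/-- Upper right directional derivative `∂⁺_{(1,l)} φ(τ,z,w)` along `κ ∈ Λ₀`. -/
def dUpp {n : ℕ} (φ : ℝ → E n → (ℝ → E n) → ℝ) (τ : ℝ) (z : E n) (w : ℝ → E n)
    (l : E n) (κ : ℝ → E n) : EReal :=
  Filter.limsup
    (fun δ : ℝ =>
      (((φ (τ + δ) (z + δ • l) (shift κ (τ + δ)) - φ τ z w) / δ : ℝ) : EReal))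
    (nhdsWithin 0 (Set.Ioi 0))

/-- `(p₀,p) ∈ D⁻φ(τ,z,w)`. -/
def InSubdiff {n : ℕ} (I : ℕ) (h : ℝ) (φ : ℝ → E n → (ℝ → E n) → ℝ)
    (τ : ℝ) (z : E n) (w : ℝ → E n) (p0 : ℝ) (p : E n) : Prop :=
  ∀ κ : ℝ → E n, InLambda0 I h τ z w κ →
    ∀ ε > 0, ∃ δ > 0, ∀ (t : ℝ) (x : E n),
      (t, x) ∈ OPlus δ τ z → (t, x) ≠ (τ, z) →
        -ε ≤ (φ t x (shift κ t) - φ τ z w - (t - τ) * p0 - ⟪x - z, p⟫_ℝ) /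
          (|t - τ| + ‖x - z‖)

/-- `(q₀,q) ∈ D⁺φ(τ,z,w)`. -/
def InSuperdiff {n : ℕ} (I : ℕ) (h : ℝ) (φ : ℝ → E n → (ℝ → E n) → ℝ)
    (τ : ℝ) (z : E n) (w : ℝ → E n) (q0 : ℝ) (q : E n) : Prop :=
  ∀ κ : ℝ → E n, InLambda0 I h τ z w κ →
    ∀ ε > 0, ∃ δ > 0, ∀ (t : ℝ) (x : E n),
      (t, x) ∈ OPlus δ τ z → (t, x) ≠ (τ, z) →
        (φ t x (shift κ t) - φ τ z w - (t - τ) * q0 - ⟪x - z, q⟫_ℝ) /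
          (|t - τ| + ‖x - z‖) ≤ ε

/-- The Dini (directional-derivative) form of the generalized solution:
statement (c) of Theorem `teo:equivalent_solutions`. -/
def DiniSol {n : ℕ} (I : ℕ) (h : ℝ) (g : ℝ → E n → E n)
    (H : ℝ → E n → E n → E n → ℝ) (cH : ℝ) (σf : E n → (ℝ → E n) → ℝ)
    (φ : ℝ → E n → (ℝ → E n) → ℝ) : Prop :=
  Phi1 I h φ ∧ Phi2 I h φ ∧ TermCond I h σf φ ∧
  ∀ (τ : ℝ) (z : E n) (w : ℝ → E n), InGstar I h τ w → ∀ s : E n,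
    ∀ κ : ℝ → E n, InLambda0 I h τ z w κ →
      (∀ ε > 0, ∃ l : E n, l - ciDg I h g τ w ∈ Fset cH 0 z (w (-h)) ∧
        dLow φ τ z w l κ +
          ((⟪ciDg I h g τ w, s⟫_ℝ + H τ z (w (-h)) s - ⟪l, s⟫_ℝ : ℝ) : EReal)
          ≤ ((ε : ℝ) : EReal)) ∧
      (∀ ε > 0, ∃ l : E n, l - ciDg I h g τ w ∈ Fset cH 0 z (w (-h)) ∧
        ((-ε : ℝ) : EReal) ≤ dUpp φ τ z w l κ +
          ((⟪ciDg I h g τ w, s⟫_ℝ + H τ z (w (-h)) s - ⟪l, s⟫_ℝ : ℝ) : EReal))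

/-- The sub/superdifferential form of the generalized solution:
statement (d) of Theorem `teo:equivalent_solutions`. -/
def SubSuperSol {n : ℕ} (I : ℕ) (h : ℝ) (g : ℝ → E n → E n)
    (H : ℝ → E n → E n → E n → ℝ) (σf : E n → (ℝ → E n) → ℝ)
    (φ : ℝ → E n → (ℝ → E n) → ℝ) : Prop :=
  Phi1 I h φ ∧ Phi2 I h φ ∧ TermCond I h σf φ ∧
  ∀ (τ : ℝ) (z : E n) (w : ℝ → E n), InGstar I h τ w →
    (∀ (p0 : ℝ) (p : E n), InSubdiff I h φ τ z w p0 p →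
      p0 + ⟪ciDg I h g τ w, p⟫_ℝ + H τ z (w (-h)) p ≤ 0) ∧
    (∀ (q0 : ℝ) (q : E n), InSuperdiff I h φ τ z w q0 q →
      0 ≤ q0 + ⟪ciDg I h g τ w, q⟫_ℝ + H τ z (w (-h)) q)

/-- `(w^j) ∈ Γ(z,w)`. -/
def InGamma {n : ℕ} (h : ℝ) (z : E n) (w : ℝ → E n) (ws : ℕ → ℝ → E n) : Prop :=
  (∀ j, IsLip h (ws j)) ∧
  Tendsto (fun j => norm1 h (fun ξ => w ξ - ws j ξ)) atTop (nhds 0) ∧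
  Tendsto (fun j => ‖z - leftLimit (ws j) 0‖) atTop (nhds 0) ∧
  ∀ ξ ∈ Set.Ico (-h) (0:ℝ), Tendsto (fun j => ‖w ξ - ws j ξ‖) atTop (nhds 0)

/-- Condition (w³) of Lemma `lem:Gamma_nonempty`. -/
def CondW3 {n : ℕ} (h : ℝ) (w : ℝ → E n) (ws : ℕ → ℝ → E n) : Prop :=
  ∀ ξ ∈ Set.Ioo (-h) (0:ℝ), leftLimit w ξ = w ξ →
    ∃ δ > 0, Tendsto
      (fun j => ⨆ ζ : Set.Icc (-δ) δ, ‖w (ξ + ζ.1) - ws j (ξ + ζ.1)‖)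
      atTop (nhds 0)

/-- `θ^α_γ(τ)` (with `λ_H = λ_H(α)`, `λ_g = λ_g(α)` given). -/
def thetaG (lamH lamg h γ τ : ℝ) : ℝ :=
  (Real.exp (-(4 * lamH + 2 * lamg / h) * τ) - γ) / γ

/-- `ν^α_{γ,ε}(τ,z,w)`. -/
def nuG {n : ℕ} (lamH lamg h γ ε τ : ℝ) (z : E n) (w : ℝ → E n) : ℝ :=
  thetaG lamH lamg h γ τ *
    (Real.sqrt (ε ^ 4 + ‖z‖ ^ 2) +
      2 * lamH * ∫ ξ in (-h)..(0:ℝ), (1 - 2 * lamg * ξ / h) * ‖w ξ‖)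

/-- `∇_z ν^α_{γ,ε}(τ,z,·)`. -/
def gradNuG {n : ℕ} (lamH lamg h γ ε τ : ℝ) (z : E n) : E n :=
  (thetaG lamH lamg h γ τ / Real.sqrt (ε ^ 4 + ‖z‖ ^ 2)) • z

/-- `Δy(t) = Δx(t) - g(t,x(t-h)) + g(t,x'(t-h))`. -/
def dY {n : ℕ} (h : ℝ) (g : ℝ → E n → E n) (x x' : ℝ → E n) : ℝ → E n :=
  fun t => (x t - x' t) - g t (x (t - h)) + g t (x' (t - h))

/-- `ΔH^α_{γ,ε}(ξ)`. -/
def dHdiff {n : ℕ} (lamH lamg h γ ε : ℝ) (g : ℝ → E n → E n)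
    (H : ℝ → E n → E n → E n → ℝ) (x x' : ℝ → E n) (ξ : ℝ) : ℝ :=
  H ξ (x ξ) (x (ξ - h)) (gradNuG lamH lamg h γ ε ξ (dY h g x x' ξ)) -
    H ξ (x' ξ) (x' (ξ - h)) (gradNuG lamH lamg h γ ε ξ (dY h g x x' ξ)) +
    ⟪dY h g x x' ξ, gradNuG lamH lamg h γ ε ξ (dY h g x x' ξ)⟫_ℝ

/-- Continuity of `φ̂ : [0,ϑ] × Lip → ℝ` with respect to the uniform norm. -/
def HatContinuous {n : ℕ} (I : ℕ) (h : ℝ) (φh : ℝ → (ℝ → E n) → ℝ) : Prop :=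
  ∀ τ ∈ Set.Icc (0:ℝ) ((I:ℝ) * h), ∀ w : ℝ → E n, IsLip h w → ∀ ε > 0, ∃ δ > 0,
    ∀ τ' ∈ Set.Icc (0:ℝ) ((I:ℝ) * h), ∀ w' : ℝ → E n, IsLip h w' →
      |τ' - τ| ≤ δ → (∀ ξ ∈ Set.Ico (-h) (0:ℝ), ‖w' ξ - w ξ‖ ≤ δ) →
        |φh τ' w' - φh τ w| ≤ ε

/-- The functional `φ̂` from Lemma `lem:ex_un_minimax_sol`: continuous w.r.t. the uniform
norm, satisfying the terminal condition on `Lip` and the two minimax inequalities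
over `X⁰`. -/
def HatSol {n : ℕ} (I : ℕ) (h : ℝ) (g : ℝ → E n → E n)
    (H : ℝ → E n → E n → E n → ℝ) (cH : ℝ) (σf : E n → (ℝ → E n) → ℝ)
    (φh : ℝ → (ℝ → E n) → ℝ) : Prop :=
  HatContinuous I h φh ∧
  (∀ w : ℝ → E n, IsLip h w → φh ((I:ℝ) * h) w = σf (leftLimit w 0) w) ∧
  ∀ τ ∈ Set.Ico (0:ℝ) ((I:ℝ) * h), ∀ w : ℝ → E n, IsLip h w →
    ∀ t ∈ Set.Ioc τ ((I:ℝ) * h), ∀ s : E n,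
      (∀ ε > 0, ∃ x : ℝ → E n, InX I h g cH 0 τ (leftLimit w 0) w x ∧
        φh t (shift x t) + omegaF h g H τ t x s ≤ φh τ w + ε) ∧
      (∀ ε > 0, ∃ x : ℝ → E n, InX I h g cH 0 τ (leftLimit w 0) w x ∧
        φh τ w - ε ≤ φh t (shift x t) + omegaF h g H τ t x s)

/-! Fix the path `κ ∈ Λ₀(τ,z,w)` that stays at `z` after `τ`. Ci-differentiability says that
`f(t,x) = φ(t,x,κ_t) - φ(τ,z,w) - (t-τ)a - ⟪x-z,p⟫` is `o(|t-τ| + ‖x-z‖)`. The modulus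
`ω(d) = sup {|f|/r : r ≤ d}` of this estimate, averaged twice by integration, yields a `C¹` even
`ζ` with `ζ(0) = ζ'(0) = 0` and `ζ(d) ≥ d ω(d)`; the penalty `P = ζ(2(t-τ)) + ∑ ζ(2n(xᵢ-zᵢ))`
then dominates `|f|` near `(τ,z)`. The test functions `ta + ⟪p,x⟫ ∓ P` touch `φ` from below and
from above along `κ`, and have time derivative `a` and gradient `p` at `(τ,z)`, so the sub- and
supersolution inequalities give `≤ 0` and `≥ 0`. -/

section Majorant

variable {ω : ℝ → ℝ}

/-- `2 sign(y)` times the mean of `ω` over `[2|y|, 4|y|]`; the junk value `x / 0 = 0` makes it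
vanish at `y = 0`. -/
def oddAverage (ω : ℝ → ℝ) (y : ℝ) : ℝ := (∫ t in (2 * |y|)..(4 * |y|), ω t) / y

def smoothMajorant (ω : ℝ → ℝ) (d : ℝ) : ℝ := ∫ y in (0:ℝ)..d, oddAverage ω y

lemma oddAverage_neg (y : ℝ) : oddAverage ω (-y) = -oddAverage ω y := by
  rw [oddAverage, oddAverage, abs_neg, div_neg]

lemma oddAverage_zero : oddAverage ω 0 = 0 := by
  simp [oddAverage]

lemma oddAverage_mem_Icc (hω : Monotone ω) {y : ℝ} (hy : 0 < y) :
    oddAverage ω y ∈ Set.Icc (2 * ω (2 * y)) (2 * ω (4 * y)) := by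
  have hle : 2 * y ≤ 4 * y := by linarith
  have hint : IntervalIntegrable ω volume (2 * y) (4 * y) := hω.intervalIntegrable
  have lower := intervalIntegral.integral_mono_on hle intervalIntegrable_const hint
    fun t ht => hω ht.1
  have upper := intervalIntegral.integral_mono_on hle hint intervalIntegrable_const
    fun t ht => hω ht.2
  rw [intervalIntegral.integral_const, smul_eq_mul, show 4 * y - 2 * y = 2 * y by ring]
    at lower upper
  rw [oddAverage, abs_of_pos hy]
  constructor
  · rw [le_div_iff₀ hy]; linarith
  · rw [div_le_iff₀ hy]; linarith

lemma oddAverage_nonneg (hω : Monotone ω) (hω0 : ∀ d, 0 ≤ ω d) {y : ℝ} (hy : 0 ≤ y) :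
    0 ≤ oddAverage ω y := by
  rcases hy.eq_or_lt with rfl | hy
  · rw [oddAverage_zero]
  · linarith [(oddAverage_mem_Icc hω hy).1, hω0 (2 * y)]

lemma abs_oddAverage (hω : Monotone ω) (hω0 : ∀ d, 0 ≤ ω d) (y : ℝ) :
    |oddAverage ω y| = oddAverage ω |y| := by
  rcases le_total 0 y with hy | hy
  · rw [abs_of_nonneg hy, abs_of_nonneg (oddAverage_nonneg hω hω0 hy)]
  · have hneg := oddAverage_nonneg hω hω0 (neg_nonneg.2 hy)
    rw [oddAverage_neg] at hneg
    rw [abs_of_nonpos hy, oddAverage_neg, abs_of_nonpos (neg_nonneg.1 hneg)]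

lemma abs_oddAverage_le (hω : Monotone ω) (hω0 : ∀ d, 0 ≤ ω d) (y : ℝ) :
    |oddAverage ω y| ≤ 2 * ω (4 * |y|) := by
  rw [abs_oddAverage hω hω0]
  rcases eq_or_ne y 0 with rfl | hy
  · simpa [oddAverage_zero] using hω0 0
  · exact (oddAverage_mem_Icc hω (abs_pos.2 hy)).2

lemma continuous_oddAverage (hω : Monotone ω) (hω0 : ∀ d, 0 ≤ ω d)
    (hω_small : ∀ ε > 0, ∃ d₀ > 0, ∀ d ≤ d₀, ω d ≤ ε) : Continuous (oddAverage ω) := by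
  rw [continuous_iff_continuousAt]
  intro y
  rcases eq_or_ne y 0 with rfl | hy
  · rw [ContinuousAt, oddAverage_zero, Metric.tendsto_nhds]
    intro ε hε
    obtain ⟨d₀, hd₀, hd⟩ := hω_small (ε / 4) (by linarith)
    filter_upwards [Metric.ball_mem_nhds (0:ℝ) (by linarith : 0 < d₀ / 4)] with x hx
    rw [Metric.mem_ball, Real.dist_eq, sub_zero] at hx
    rw [Real.dist_eq, sub_zero]
    linarith [abs_oddAverage_le hω hω0 x, hd (4 * |x|) (by linarith)]
  · have hprim := intervalIntegral.continuous_primitive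
      (fun a b => (hω.intervalIntegrable : IntervalIntegrable ω volume a b)) 0
    have hint : Continuous fun y : ℝ => ∫ t in (2 * |y|)..(4 * |y|), ω t := by
      have h4 : Continuous fun y : ℝ => 4 * |y| := by fun_prop
      have h2 : Continuous fun y : ℝ => 2 * |y| := by fun_prop
      have := (hprim.comp h4).sub (hprim.comp h2)
      refine this.congr fun x => ?_
      exact intervalIntegral.integral_interval_sub_left hω.intervalIntegrable
        hω.intervalIntegrable
    exact (hint.continuousAt.div continuousAt_id hy :)

lemma hasDerivAt_smoothMajorant (hω : Monotone ω) (hω0 : ∀ d, 0 ≤ ω d)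
    (hω_small : ∀ ε > 0, ∃ d₀ > 0, ∀ d ≤ d₀, ω d ≤ ε) (d : ℝ) :
    HasDerivAt (smoothMajorant ω) (oddAverage ω d) d :=
  ((continuous_oddAverage hω hω0 hω_small).integral_hasStrictDerivAt 0 d).hasDerivAt

lemma contDiff_smoothMajorant (hω : Monotone ω) (hω0 : ∀ d, 0 ≤ ω d)
    (hω_small : ∀ ε > 0, ∃ d₀ > 0, ∀ d ≤ d₀, ω d ≤ ε) : ContDiff ℝ 1 (smoothMajorant ω) := by
  have hderiv : deriv (smoothMajorant ω) = oddAverage ω :=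
    funext fun d => (hasDerivAt_smoothMajorant hω hω0 hω_small d).deriv
  rw [contDiff_one_iff_deriv, hderiv]
  exact ⟨fun d => (hasDerivAt_smoothMajorant hω hω0 hω_small d).differentiableAt,
    continuous_oddAverage hω hω0 hω_small⟩

lemma smoothMajorant_zero : smoothMajorant ω 0 = 0 := by
  simp [smoothMajorant]

lemma smoothMajorant_neg (d : ℝ) : smoothMajorant ω (-d) = smoothMajorant ω d := by
  have h := intervalIntegral.integral_comp_neg (a := 0) (b := d) (oddAverage ω)
  simp only [oddAverage_neg, intervalIntegral.integral_neg, neg_zero] at h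
  rw [smoothMajorant, smoothMajorant, intervalIntegral.integral_symm, ← h, neg_neg]

lemma smoothMajorant_nonneg (hω : Monotone ω) (hω0 : ∀ d, 0 ≤ ω d) (d : ℝ) :
    0 ≤ smoothMajorant ω d := by
  wlog hd : 0 ≤ d
  · simpa [smoothMajorant_neg] using this hω hω0 (-d) (by linarith)
  exact intervalIntegral.integral_nonneg hd fun y hy => oddAverage_nonneg hω hω0 hy.1

lemma mul_le_smoothMajorant (hω : Monotone ω) (hω0 : ∀ d, 0 ≤ ω d)
    (hω_small : ∀ ε > 0, ∃ d₀ > 0, ∀ d ≤ d₀, ω d ≤ ε) {d : ℝ} (hd : 0 ≤ d) :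
    d * ω d ≤ smoothMajorant ω d := by
  have hint : ∀ a b, IntervalIntegrable (oddAverage ω) volume a b :=
    (continuous_oddAverage hω hω0 hω_small).intervalIntegrable
  rcases hd.eq_or_lt with rfl | hd
  · simp [smoothMajorant_zero]
  have hhalf : ∫ _ in (d / 2)..d, 2 * ω d ≤ ∫ y in (d / 2)..d, oddAverage ω y :=
    intervalIntegral.integral_mono_on (by linarith) intervalIntegrable_const (hint _ _)
      fun y hy => calc
        2 * ω d ≤ 2 * ω (2 * y) := by gcongr; exact hω (by linarith [hy.1])
        _ ≤ oddAverage ω y := (oddAverage_mem_Icc hω (by linarith [hy.1])).1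
  rw [intervalIntegral.integral_const, smul_eq_mul] at hhalf
  have hfirst : 0 ≤ ∫ y in (0:ℝ)..(d / 2), oddAverage ω y :=
    intervalIntegral.integral_nonneg (by linarith) fun y hy => oddAverage_nonneg hω hω0 hy.1
  rw [smoothMajorant, ← intervalIntegral.integral_add_adjacent_intervals (hint 0 (d / 2))
    (hint (d / 2) d)]
  linarith

end Majorant

section Modulus

variable {Q : Type*} {A : Set Q} {f r : Q → ℝ}

def ratioModulus (A : Set Q) (f r : Q → ℝ) (d : ℝ) : ℝ :=
  sSup (insert 0 ((fun q => |f q| / r q) '' {q ∈ A | r q ≤ d}))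

lemma bddAbove_ratioModulus_set (hbound : ∀ q ∈ A, |f q| ≤ r q) (d : ℝ) :
    BddAbove (insert 0 ((fun q => |f q| / r q) '' {q ∈ A | r q ≤ d})) := by
  refine ⟨1, ?_⟩
  rintro _ (rfl | ⟨q, ⟨hqA, -⟩, rfl⟩)
  · exact zero_le_one
  · exact div_le_one_of_le₀ (hbound q hqA) ((abs_nonneg _).trans (hbound q hqA))

lemma ratioModulus_nonneg (hbound : ∀ q ∈ A, |f q| ≤ r q) (d : ℝ) :
    0 ≤ ratioModulus A f r d :=
  le_csSup (bddAbove_ratioModulus_set hbound d) (Set.mem_insert 0 _)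

lemma monotone_ratioModulus (hbound : ∀ q ∈ A, |f q| ≤ r q) :
    Monotone (ratioModulus A f r) := fun _ d' hdd' =>
  csSup_le_csSup (bddAbove_ratioModulus_set hbound d') (Set.insert_nonempty _ _)
    (Set.insert_subset_insert (Set.image_mono fun _ hq => ⟨hq.1, hq.2.trans hdd'⟩))

lemma abs_le_ratioModulus_mul (hbound : ∀ q ∈ A, |f q| ≤ r q) {q : Q} (hq : q ∈ A) :
    |f q| ≤ ratioModulus A f r (r q) * r q := by
  rcases ((abs_nonneg _).trans (hbound q hq)).eq_or_lt with h0 | hpos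
  · simpa [← h0] using hbound q hq
  · rw [← div_le_iff₀ hpos]
    exact le_csSup (bddAbove_ratioModulus_set hbound _)
      (Set.mem_insert_of_mem _ ⟨q, ⟨hq, le_rfl⟩, rfl⟩)

lemma ratioModulus_small (hbound : ∀ q ∈ A, |f q| ≤ r q)
    (hsmall : ∀ ε > 0, ∃ d₀ > 0, ∀ q ∈ A, r q ≤ d₀ → |f q| ≤ ε * r q) :
    ∀ ε > 0, ∃ d₀ > 0, ∀ d ≤ d₀, ratioModulus A f r d ≤ ε := by
  intro ε hε
  obtain ⟨d₀, hd₀, hd⟩ := hsmall ε hε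
  refine ⟨d₀, hd₀, fun d hdd₀ => csSup_le (Set.insert_nonempty _ _) ?_⟩
  rintro _ (rfl | ⟨q, ⟨hqA, hqd⟩, rfl⟩)
  · exact hε.le
  · exact div_le_of_le_mul₀ ((abs_nonneg _).trans (hbound q hqA)) hε.le
      (hd q hqA (hqd.trans hdd₀))

theorem exists_contDiff_even_majorant (hbound : ∀ q ∈ A, |f q| ≤ r q)
    (hsmall : ∀ ε > 0, ∃ d₀ > 0, ∀ q ∈ A, r q ≤ d₀ → |f q| ≤ ε * r q) :
    ∃ ζ : ℝ → ℝ, ContDiff ℝ 1 ζ ∧ HasDerivAt ζ 0 0 ∧ ζ 0 = 0 ∧ (∀ d, 0 ≤ ζ d) ∧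
      (∀ d, ζ (-d) = ζ d) ∧ ∀ q ∈ A, ∀ d, r q ≤ d → |f q| ≤ ζ d := by
  set ω := ratioModulus A f r
  have hω : Monotone ω := monotone_ratioModulus hbound
  have hω0 : ∀ d, 0 ≤ ω d := ratioModulus_nonneg hbound
  have hω_small := ratioModulus_small hbound hsmall
  refine ⟨smoothMajorant ω, contDiff_smoothMajorant hω hω0 hω_small, ?_, smoothMajorant_zero,
    smoothMajorant_nonneg hω hω0, smoothMajorant_neg, fun q hq d hd => ?_⟩
  · simpa [oddAverage_zero] using hasDerivAt_smoothMajorant hω hω0 hω_small 0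
  · have hr : 0 ≤ r q := (abs_nonneg _).trans (hbound q hq)
    calc |f q| ≤ ω (r q) * r q := abs_le_ratioModulus_mul hbound hq
      _ ≤ d * ω d := by rw [mul_comm]; exact mul_le_mul hd (hω hd) (hω0 _) (hr.trans hd)
      _ ≤ smoothMajorant ω d := mul_le_smoothMajorant hω hω0 hω_small (hr.trans hd)

end Modulus

lemma EuclideanSpace.exists_norm_le_card_mul_abs_apply {ι : Type*} [Fintype ι]
    {y : EuclideanSpace ℝ ι} (hy : y ≠ 0) : ∃ i, ‖y‖ ≤ Fintype.card ι * |y i| := by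
  have : Nonempty ι := not_isEmpty_iff.1 fun _ => hy (PiLp.ext fun i => isEmptyElim i)
  obtain ⟨i, -, hi⟩ := Finset.exists_max_image Finset.univ (fun i => |y i|) Finset.univ_nonempty
  have hcard : (1 : ℝ) ≤ Fintype.card ι := by exact_mod_cast Fintype.card_pos
  refine ⟨i, ?_⟩
  rw [EuclideanSpace.norm_eq, Real.sqrt_le_left (by positivity)]
  calc ∑ j, ‖y j‖ ^ 2 ≤ ∑ _j : ι, |y i| ^ 2 := by
        gcongr with j; exact hi j (Finset.mem_univ j)
    _ = Fintype.card ι * |y i| ^ 2 := by simp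
    _ ≤ (Fintype.card ι * |y i|) ^ 2 := by nlinarith [sq_nonneg (y i), sq_abs (y i)]

section Penalty

variable {n : ℕ} {ζ : ℝ → ℝ} {τ : ℝ} {z : E n}

/-- A `C¹` stand-in for `ζ(|t - τ| + ‖x - z‖)`, which fails to be differentiable where `t = τ`
or `x = z`. -/
def coordPenalty (ζ : ℝ → ℝ) (τ : ℝ) (z : E n) (t : ℝ) (x : E n) : ℝ :=
  ζ (2 * (t - τ)) + ∑ i, ζ (2 * n * (x i - z i))

lemma contDiff_coordPenalty (hζ : ContDiff ℝ 1 ζ) :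
    ContDiff ℝ 1 (Function.uncurry (coordPenalty ζ τ z)) := by
  unfold coordPenalty Function.uncurry
  fun_prop

lemma hasFDerivAt_coordPenalty (hζ : HasDerivAt ζ 0 0) :
    HasFDerivAt (Function.uncurry (coordPenalty ζ τ z)) (0 : ℝ × E n →L[ℝ] ℝ) (τ, z) := by
  have hcomp : ∀ {l : ℝ × E n → ℝ}, DifferentiableAt ℝ l (τ, z) → l (τ, z) = 0 →
      HasFDerivAt (fun q => ζ (l q)) (0 : ℝ × E n →L[ℝ] ℝ) (τ, z) := fun {l} hl hl0 => by
    have hζl : HasDerivAt ζ 0 (l (τ, z)) := by rwa [hl0]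
    have := hζl.comp_hasFDerivAt (τ, z) hl.hasFDerivAt
    rwa [zero_smul] at this
  have htime := hcomp (l := fun q => 2 * (q.1 - τ)) (by fun_prop) (by simp)
  have hspace : ∀ i : Fin n, HasFDerivAt (fun q : ℝ × E n => ζ (2 * n * (q.2 i - z i)))
      (0 : ℝ × E n →L[ℝ] ℝ) (τ, z) := fun i =>
    hcomp (l := fun q => 2 * n * (q.2 i - z i)) (by fun_prop) (by simp)
  have hsum := htime.add (HasFDerivAt.fun_sum (u := Finset.univ) fun i _ => hspace i)
  rw [Finset.sum_const_zero, add_zero] at hsum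
  exact hsum

lemma coordPenalty_self (hζ : ζ 0 = 0) : coordPenalty ζ τ z τ z = 0 := by
  simp [coordPenalty, hζ]

lemma exists_le_coordPenalty (hζ_nonneg : ∀ d, 0 ≤ ζ d) (hζ_even : ∀ d, ζ (-d) = ζ d)
    (t : ℝ) (x : E n) :
    ∃ d, |t - τ| + ‖x - z‖ ≤ d ∧ ζ d ≤ coordPenalty ζ τ z t x := by
  have hζ_abs : ∀ d, ζ |d| = ζ d := fun d => by
    rcases abs_choice d with h | h <;> rw [h]; exact hζ_even d
  have hsum : 0 ≤ ∑ i, ζ (2 * n * (x i - z i)) := Finset.sum_nonneg fun i _ => hζ_nonneg _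
  rcases le_or_gt ‖x - z‖ |t - τ| with hx | hx
  · refine ⟨|2 * (t - τ)|, ?_, ?_⟩
    · rw [abs_mul, abs_two]; linarith
    · rw [hζ_abs, coordPenalty]; linarith
  · have hxz : x - z ≠ 0 := norm_pos_iff.1 ((abs_nonneg _).trans_lt hx)
    obtain ⟨i, hi⟩ := EuclideanSpace.exists_norm_le_card_mul_abs_apply hxz
    refine ⟨|2 * n * (x i - z i)|, ?_, ?_⟩
    · simp only [Fintype.card_fin, PiLp.sub_apply] at hi
      rw [abs_mul, abs_mul, abs_two, Nat.abs_cast]; linarith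
    · rw [hζ_abs, coordPenalty]
      linarith [hζ_nonneg (2 * (t - τ)), Finset.single_le_sum (fun j _ => hζ_nonneg (2 * n * (x j - z j)))
        (Finset.mem_univ i)]

end Penalty

namespace PiecewiseLipOn

variable {n : ℕ} {x y : ℝ → E n} {a b : ℝ}

lemma congr (hx : PiecewiseLipOn x a b) (hxy : Set.EqOn x y (Set.Ico a b)) :
    PiecewiseLipOn y a b := by
  obtain ⟨k, ξ, hk, hξ0, hξk, hξ, hlip⟩ := hx
  have hmono : StrictMonoOn ξ (Set.Iic k) := strictMonoOn_Iic_of_lt_succ hξ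
  refine ⟨k, ξ, hk, hξ0, hξk, hξ, fun i hi => ?_⟩
  obtain ⟨K, hK⟩ := hlip i hi
  have hsub : Set.Ico (ξ i) (ξ (i + 1)) ⊆ Set.Ico a b := by
    rw [← hξ0, ← hξk]
    exact Set.Ico_subset_Ico
      (hmono.monotoneOn (Set.mem_Iic.2 k.zero_le) (Set.mem_Iic.2 hi.le) i.zero_le)
      (hmono.monotoneOn (Set.mem_Iic.2 hi) (Set.mem_Iic.2 le_rfl) hi)
  refine ⟨K, fun s hs t ht => ?_⟩
  rw [← hxy (hsub hs), ← hxy (hsub ht)]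
  exact hK hs ht

lemma comp_sub_const (hx : PiecewiseLipOn x a b) (c : ℝ) :
    PiecewiseLipOn (fun t => x (t - c)) (a + c) (b + c) := by
  obtain ⟨k, ξ, hk, hξ0, hξk, hξ, hlip⟩ := hx
  refine ⟨k, fun i => ξ i + c, hk, by simp [hξ0], by simp [hξk], fun i hi => by
    simpa using hξ i hi, fun i hi => ?_⟩
  obtain ⟨K, hK⟩ := hlip i hi
  refine ⟨K * 1, hK.comp (IsometryEquiv.subRight c).isometry.lipschitz.lipschitzOnWith ?_⟩
  exact fun t ht =>
    ⟨by simpa using sub_le_sub_right ht.1 c, by simpa using sub_lt_sub_right ht.2 c⟩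

lemma append {c : ℝ} {K : NNReal} (hx : PiecewiseLipOn x a b) (hbc : b < c)
    (hK : LipschitzOnWith K x (Set.Ico b c)) : PiecewiseLipOn x a c := by
  obtain ⟨k, ξ, hk, hξ0, hξk, hξ, hlip⟩ := hx
  refine ⟨k + 1, fun i => if i ≤ k then ξ i else c, k.succ_pos, by simp [hξ0], by simp,
    fun i hi => ?_, fun i hi => ?_⟩
  · rcases (Nat.lt_succ_iff.1 hi).lt_or_eq with hi | rfl
    · simpa [hi.le, Nat.succ_le_of_lt hi] using hξ i hi
    · simpa [hξk] using hbc
  · rcases (Nat.lt_succ_iff.1 hi).lt_or_eq with hi | rfl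
    · simpa [hi.le, Nat.succ_le_of_lt hi] using hlip i hi
    · exact ⟨K, by simpa [hξk] using hK⟩

end PiecewiseLipOn

lemma inLambda0_ite {n I : ℕ} {h τ : ℝ} (z : E n) {w : ℝ → E n} (hw : IsPLip h w)
    (hτ : τ < I * h) :
    InLambda0 I h τ z w (fun t => if t < τ then w (t - τ) else z) := by
  have hpast : PiecewiseLipOn (fun t => if t < τ then w (t - τ) else z) (τ - h) τ := by
    have := hw.comp_sub_const τ
    rw [neg_add_eq_sub, zero_add] at this
    exact this.congr fun t ht => (if_pos ht.2).symm
  have hfuture : LipschitzOnWith 0 (fun t => if t < τ then w (t - τ) else z)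
      (Set.Ico τ (I * h)) := fun s hs t ht => by
    simp [if_neg (not_lt.2 hs.1), if_neg (not_lt.2 ht.1)]
  exact ⟨⟨hpast.append hτ hfuture, if_neg (lt_irrefl τ), fun t ht => if_pos ht.2⟩,
    fun t ht => if_neg (not_lt.2 ht.1)⟩

lemma InGstar.lt_mul {n I : ℕ} {h τ : ℝ} {w : ℝ → E n} (hG : InGstar I h τ w) :
    τ < I * h := by
  obtain ⟨⟨i, hiI, hτi⟩, -⟩ := hG
  have hh : 0 < h := by nlinarith [hτi.1, hτi.2]
  calc τ < (i + 1) * h := hτi.2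
    _ ≤ I * h := by gcongr; exact_mod_cast hiI

lemma exists_OPlus_bounds_of_isLittleO {n : ℕ} {τ T : ℝ} {z : E n} {f : ℝ × E n → ℝ}
    (hT : τ < T)
    (hf : f =o[nhdsWithin (τ, z) (Set.Icc τ T ×ˢ (Set.univ : Set (E n)))]
      fun q : ℝ × E n => |q.1 - τ| + ‖q.2 - z‖) :
    ∃ δ > 0, (∀ q ∈ OPlus δ τ z, |f q| ≤ |q.1 - τ| + ‖q.2 - z‖) ∧
      ∀ ε > 0, ∃ d₀ > 0, ∀ q ∈ OPlus δ τ z,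
        |q.1 - τ| + ‖q.2 - z‖ ≤ d₀ → |f q| ≤ ε * (|q.1 - τ| + ‖q.2 - z‖) := by
  have hball : ∀ ε > 0, ∃ ρ > 0, ∀ q ∈ Set.Icc τ T ×ˢ (Set.univ : Set (E n)),
      dist q (τ, z) < ρ → |f q| ≤ ε * (|q.1 - τ| + ‖q.2 - z‖) := fun ε hε => by
    obtain ⟨ρ, hρ, hb⟩ := Metric.mem_nhdsWithin_iff.1 (hf.def hε)
    refine ⟨ρ, hρ, fun q hqS hq => ?_⟩
    simpa [abs_of_nonneg (add_nonneg (abs_nonneg (q.1 - τ)) (norm_nonneg (q.2 - z)))]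
      using hb ⟨hq, hqS⟩
  have hdist : ∀ q : ℝ × E n, dist q (τ, z) ≤ |q.1 - τ| + ‖q.2 - z‖ := fun q => by
    rw [Prod.dist_eq, Real.dist_eq, dist_eq_norm]
    exact max_le (le_add_of_nonneg_right (norm_nonneg _)) (le_add_of_nonneg_left (abs_nonneg _))
  obtain ⟨ρ, hρ, hbound⟩ := hball 1 one_pos
  set δ := min (ρ / 2) (T - τ)
  have hδS : ∀ q ∈ OPlus δ τ z, q ∈ Set.Icc τ T ×ˢ (Set.univ : Set (E n)) := fun q hq =>
    ⟨⟨hq.1.1, hq.1.2.trans (by linarith [min_le_right (ρ / 2) (T - τ)])⟩, trivial⟩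
  refine ⟨δ, lt_min (by linarith) (by linarith), fun q hq => ?_, fun ε hε => ?_⟩
  · have hqδ : dist q (τ, z) ≤ δ := by
      rw [Prod.dist_eq, Real.dist_eq, dist_eq_norm, abs_of_nonneg (by linarith [hq.1.1])]
      exact max_le (by linarith [hq.1.2]) hq.2
    simpa using hbound q (hδS q hq) (by linarith [min_le_left (ρ / 2) (T - τ)])
  · obtain ⟨ρ', hρ', hsmall⟩ := hball ε hε
    exact ⟨ρ' / 2, by linarith, fun q hq hqd =>
      hsmall q (hδS q hq) ((hdist q).trans_lt (by linarith))⟩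

theorem IsViscositySol.eq_zero_of_abs_le_penalty {n I : ℕ} {h : ℝ} {g : ℝ → E n → E n}
    {H : ℝ → E n → E n → E n → ℝ} {σf : E n → (ℝ → E n) → ℝ}
    {φ : ℝ → E n → (ℝ → E n) → ℝ} (hφ : IsViscositySol I h g H σf φ)
    {τ : ℝ} {z : E n} {w κ : ℝ → E n} (hG : InGstar I h τ w) (hκ : InLambda0 I h τ z w κ)
    {a : ℝ} {p : E n} {δ : ℝ} (hδ : 0 < δ) {P : ℝ → E n → ℝ}
    (hP : ContDiff ℝ 1 (Function.uncurry P)) (hPτz : P τ z = 0)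
    (hP' : HasFDerivAt (Function.uncurry P) (0 : ℝ × E n →L[ℝ] ℝ) (τ, z))
    (hle : ∀ t x, (t, x) ∈ OPlus δ τ z →
      |φ t x (shift κ t) - φ τ z w - (t - τ) * a - ⟪x - z, p⟫_ℝ| ≤ P t x) :
    a + ⟪ciDg I h g τ w, p⟫_ℝ + H τ z (w (-h)) p = 0 := by
  set ψ : ℝ → ℝ → E n → ℝ := fun c t x => t * a + ⟪p, x⟫_ℝ + c * P t x
  have hψ : ∀ c, ContDiff ℝ 1 (Function.uncurry (ψ c)) := fun c =>
    ((contDiff_fst.mul contDiff_const).add (contDiff_const.inner ℝ contDiff_snd)).add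
      (contDiff_const.mul hP)
  have hPt : HasDerivAt (fun r => P r z) 0 τ := by
    have := hP'.comp_hasDerivAt τ ((hasDerivAt_id τ).prodMk (hasDerivAt_const τ z))
    rwa [zero_apply] at this
  have hPx : HasFDerivAt (P τ) (0 : E n →L[ℝ] ℝ) z := by
    have := hP'.comp z (hasFDerivAt_prodMk_right τ z)
    rwa [ContinuousLinearMap.zero_comp] at this
  have hψt : ∀ c, deriv (fun r => ψ c r z) τ = a := fun c => by
    have := (((hasDerivAt_id τ).mul_const a).add_const ⟪p, z⟫_ℝ).add (hPt.const_mul c)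
    rw [one_mul, mul_zero, add_zero] at this
    exact this.deriv
  have hψx : ∀ c, gradient (ψ c τ) z = p := fun c => by
    have := ((InnerProductSpace.toDual ℝ (E n) p : E n →L[ℝ] ℝ).hasFDerivAt.const_add
      (τ * a)).add (hPx.const_mul c)
    rw [smul_zero, add_zero] at this
    exact (hasGradientAt_iff_hasFDerivAt.2 this).gradient
  have hinner : ∀ x : E n, ⟪x - z, p⟫_ℝ = ⟪p, x⟫_ℝ - ⟪p, z⟫_ℝ := fun x => by
    rw [real_inner_comm, inner_sub_right]
  have hsub := hφ.2.2.2.1 τ z w hG (ψ (-1)) (hψ _) δ hδ κ hκ fun t x hq => by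
    have := (abs_le.1 (hle t x hq)).1
    have := hinner x
    simp only [ψ, hPτz]
    linarith
  have hsup := hφ.2.2.2.2 τ z w hG (ψ 1) (hψ _) δ hδ κ hκ fun t x hq => by
    have := (abs_le.1 (hle t x hq)).2
    have := hinner x
    simp only [ψ, hPτz]
    linarith
  rw [hψt, hψx] at hsub hsup
  linarith

theorem viscosity_solution_satisfies_HJ_at_ci_differentiability_points_general
    {n : ℕ} (I : ℕ) (h : ℝ)
    (g : ℝ → E n → E n) (H : ℝ → E n → E n → E n → ℝ)
    (σf : E n → (ℝ → E n) → ℝ)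
    (φ : ℝ → E n → (ℝ → E n) → ℝ) (hφ : IsViscositySol I h g H σf φ)
    (τ : ℝ) (z : E n) (w : ℝ → E n) (hG : InGstar I h τ w)
    (a : ℝ) (p : E n) (hd : HasCiDeriv I h φ τ z w a p) :
    a + ⟪ciDg I h g τ w, p⟫_ℝ + H τ z (w (-h)) p = 0 := by
  have hκ := inLambda0_ite z hG.2.1 hG.lt_mul
  obtain ⟨δ, hδ, hbound, hsmall⟩ := exists_OPlus_bounds_of_isLittleO hG.lt_mul (hd _ hκ.1)
  obtain ⟨ζ, hζ, hζ', hζ0, hζ_nonneg, hζ_even, hζ_le⟩ :=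
    exists_contDiff_even_majorant hbound hsmall
  refine hφ.eq_zero_of_abs_le_penalty hG hκ hδ (contDiff_coordPenalty hζ)
    (coordPenalty_self hζ0) (hasFDerivAt_coordPenalty hζ') fun t x hq => ?_
  obtain ⟨d, hrd, hζd⟩ := exists_le_coordPenalty (τ := τ) (z := z) hζ_nonneg hζ_even t x
  exact (hζ_le _ hq d hrd).trans hζd

/-- Theorem `teo:classical_and_viscosity_solutions` (a): the viscosity solution
satisfies the Hamilton–Jacobi equation at every point of `𝔾_*` where it is
ci-differentiable. -/
theorem viscosity_solution_satisfies_HJ_at_ci_differentiability_points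
    {n : ℕ} (hn : 1 ≤ n) (I : ℕ) (hI : 1 ≤ I) (h : ℝ) (hh : 0 < h)
    (g : ℝ → E n → E n) (H : ℝ → E n → E n → E n → ℝ) (cH : ℝ)
    (σf : E n → (ℝ → E n) → ℝ)
    (hg : CondG I h g) (hH1 : CondH1 I h H) (hH2 : CondH2 I h cH H)
    (hH3 : CondH3 I h H) (hσ : CondSigma h σf)
    (φ : ℝ → E n → (ℝ → E n) → ℝ) (hφ : IsViscositySol I h g H σf φ)
    (τ : ℝ) (z : E n) (w : ℝ → E n) (hG : InGstar I h τ w)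
    (a : ℝ) (p : E n) (hd : HasCiDeriv I h φ τ z w a p) :
    a + ⟪ciDg I h g τ w, p⟫_ℝ + H τ z (w (-h)) p = 0 :=
  viscosity_solution_satisfies_HJ_at_ci_differentiability_points_general I h g H σf φ hφ τ z w hG a
    p hd
end
end

section
/- For every α > 0 there exist constants α_X = α_X(α) > 0, α_X^* = α_X^*(α) > 0, and λ_X^* = λ_X^*(α) > 0 such that, for each τ ∈ [0,ϑ] and (z,w) ∈ P(α), every function x ∈ X^1(τ,z,w) and the corresponding function y(t) = x(t) − g(t,x(t−h)), t ∈ [τ,ϑ], satisfy: (x(t),x_t) ∈ P(α_X), ‖y(t)‖ ≤ α_X^*, and ‖y(t) − y(t')‖ ≤ λ_X^* |t − t'| for all t,t' ∈ [τ,ϑ]. -/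
open Filter Set MeasureTheory Asymptotics
open scoped InnerProductSpace Topology

noncomputable section

/-!
Write `y t = x t - g t (x (t - h))`. On an interval `[u, u + ℓ]` with `ℓ ≤ h` the delayed
argument `x (t - h)` only sees the past; if `‖x‖ ≤ B` there, then `‖g t (x (t - h))‖ ≤ M(B)` by
compactness, and the inclusion gives `‖y'‖ ≤ c_H ‖y‖ + const` a.e. When moreover `c_H ℓ ≤ 1/2`,
evaluating this at a maximum point of `‖y‖` on the interval bounds `y`, hence `x`, by a constant
depending only on `B`. Finitely many such steps cover `[τ, ϑ]`; once `x` is bounded, the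
inclusion bounds `y'`, which makes `y` uniformly Lipschitz.
-/

namespace PiecewiseLipOn

variable {n : ℕ} {x : ℝ → E n} {a b : ℝ}

theorem of_lipschitzOnWith {K : NNReal} (hab : a < b) (hK : LipschitzOnWith K x (Ico a b)) :
    PiecewiseLipOn x a b :=
  ⟨1, fun i => if i = 0 then a else b, one_pos, rfl, rfl, by simpa using hab,
    fun i hi => ⟨K, by simpa [Nat.lt_one_iff.1 hi] using hK⟩⟩

theorem cons {m : ℝ} {K : NNReal} (ham : a < m) (hK : LipschitzOnWith K x (Ico a m))
    (H : PiecewiseLipOn x m b) : PiecewiseLipOn x a b := by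
  obtain ⟨k, ξ, hk, h0, hkb, hmono, hlip⟩ := H
  refine ⟨k + 1, fun i => if i = 0 then a else ξ (i - 1), k.succ_pos, rfl, by simpa using hkb,
    fun i hi => ?_, fun i hi => ?_⟩
  · rcases i with _ | i
    · simpa [h0] using ham
    · simpa using hmono i (by omega)
  · rcases i with _ | i
    · exact ⟨K, by simpa [h0] using hK⟩
    · simpa using hlip i (by omega)

@[elab_as_elim]
theorem induction_on {P : ℝ → ℝ → Prop} (H : PiecewiseLipOn x a b)
    (single : ∀ a b (K : NNReal), a < b → LipschitzOnWith K x (Ico a b) → P a b)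
    (cons : ∀ a m b (K : NNReal), a < m → LipschitzOnWith K x (Ico a m) →
      PiecewiseLipOn x m b → P m b → P a b) :
    P a b := by
  obtain ⟨k, ξ, hk, rfl, rfl, hmono, hlip⟩ := H
  induction k generalizing ξ with
  | zero => exact absurd hk (lt_irrefl 0)
  | succ k ih =>
    obtain ⟨K, hK⟩ := hlip 0 k.succ_pos
    rcases Nat.eq_zero_or_pos k with rfl | hk'
    · exact single _ _ K (hmono 0 one_pos) hK
    have tail : PiecewiseLipOn x (ξ 1) (ξ (k + 1)) :=
      ⟨k, fun i => ξ (i + 1), hk', rfl, rfl, fun i hi => hmono (i + 1) (by omega),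
        fun i hi => hlip (i + 1) (by omega)⟩
    exact cons _ _ _ K (hmono 0 k.succ_pos) hK tail
      (ih (fun i => ξ (i + 1)) hk' (fun i hi => hmono (i + 1) (by omega))
        (fun i hi => hlip (i + 1) (by omega)))

theorem exists_norm_le (H : PiecewiseLipOn x a b) : ∃ C, ∀ s ∈ Ico a b, ‖x s‖ ≤ C := by
  have single : ∀ a b (K : NNReal), a < b → LipschitzOnWith K x (Ico a b) →
      ∃ C, ∀ s ∈ Ico a b, ‖x s‖ ≤ C := by
    intro a b K hab hK
    refine ⟨‖x a‖ + K * (b - a), fun s hs => ?_⟩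
    have hdist := hK.dist_le_mul s hs a (left_mem_Ico.2 hab)
    rw [dist_eq_norm, Real.dist_eq, abs_of_nonneg (by linarith [hs.1])] at hdist
    have := norm_le_norm_add_norm_sub' (x s) (x a)
    nlinarith [hs.2, K.coe_nonneg]
  refine H.induction_on single (fun a m b K ham hK _ ih => ?_)
  obtain ⟨C₁, hC₁⟩ := single a m K ham hK
  obtain ⟨C₂, hC₂⟩ := ih
  refine ⟨max C₁ C₂, fun s hs => ?_⟩
  rcases lt_or_ge s m with hsm | hms
  · exact (hC₁ s ⟨hs.1, hsm⟩).trans (le_max_left _ _)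
  · exact (hC₂ s ⟨hms, hs.2⟩).trans (le_max_right _ _)

theorem mono {c d : ℝ} (H : PiecewiseLipOn x a b) (hac : a ≤ c) (hcd : c < d) (hdb : d ≤ b) :
    PiecewiseLipOn x c d := by
  suffices ∀ c d, a ≤ c → c < d → d ≤ b → PiecewiseLipOn x c d from this c d hac hcd hdb
  refine H.induction_on (fun a b K _ hK c d hac hcd hdb => ?_)
    (fun a m b K _ hK _ ih c d hac hcd hdb => ?_)
  · exact of_lipschitzOnWith hcd (hK.mono (Ico_subset_Ico hac hdb))
  rcases le_or_gt d m with hdm | hmd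
  · exact of_lipschitzOnWith hcd (hK.mono (Ico_subset_Ico hac hdm))
  rcases le_or_gt m c with hmc | hcm
  · exact ih c d hmc hcd hdb
  · exact cons hcm (hK.mono (Ico_subset_Ico hac le_rfl)) (ih m d le_rfl hmd hdb)

theorem comp_add_left (H : PiecewiseLipOn x a b) (t : ℝ) :
    PiecewiseLipOn (fun u => x (t + u)) (a - t) (b - t) := by
  have translate : ∀ {a b : ℝ} {K : NNReal}, LipschitzOnWith K x (Ico a b) →
      LipschitzOnWith K (fun u => x (t + u)) (Ico (a - t) (b - t)) :=
    fun {a b K} hK p hp q hq => by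
      simpa only [edist_add_left] using
        hK (show t + p ∈ Ico a b from ⟨by linarith [hp.1], by linarith [hp.2]⟩)
          (show t + q ∈ Ico a b from ⟨by linarith [hq.1], by linarith [hq.2]⟩)
  refine H.induction_on (fun a b K hab hK => of_lipschitzOnWith (by linarith) (translate hK))
    (fun a m b K ham hK _ ih => cons (by linarith) (translate hK) ih)

end PiecewiseLipOn

section normInf

variable {n : ℕ} {h : ℝ} {w : ℝ → E n}

theorem norm_le_normInf (hw : IsPLip h w) {ξ : ℝ} (hξ : ξ ∈ Ico (-h) 0) :
    ‖w ξ‖ ≤ normInf h w := by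
  obtain ⟨C, hC⟩ := PiecewiseLipOn.exists_norm_le hw
  exact le_ciSup (f := fun ξ : Ico (-h) (0:ℝ) => ‖w ξ‖)
    ⟨C, by rintro _ ⟨ζ, rfl⟩; exact hC ζ ζ.2⟩ ⟨ξ, hξ⟩

theorem normInf_le (hh : 0 < h) {C : ℝ} (hw : ∀ ξ ∈ Ico (-h) 0, ‖w ξ‖ ≤ C) :
    normInf h w ≤ C :=
  have : Nonempty (Ico (-h) (0:ℝ)) := ⟨⟨-h, left_mem_Ico.2 (neg_lt_zero.2 hh)⟩⟩
  ciSup_le fun ξ => hw ξ ξ.2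

end normInf

section DerivativeBounds

variable {F : Type*} [NormedAddCommGroup F] [NormedSpace ℝ F] {f : ℝ → F} {a b : ℝ}
  {K : NNReal}

theorem norm_sub_le_of_ae_hasDerivAt_norm_le {L : ℝ} (hab : a ≤ b)
    (hf : LipschitzOnWith K f (Icc a b))
    (hd : ∀ᵐ u, u ∈ Icc a b → ∃ l, HasDerivAt f l u ∧ ‖l‖ ≤ L) :
    ‖f b - f a‖ ≤ L * (b - a) := by
  -- test against a norming functional, so that the scalar FTC applies
  obtain ⟨φ, hφ, hφf⟩ := exists_dual_vector'' ℝ (f b - f a)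
  have hφac : AbsolutelyContinuousOnInterval (φ ∘ f) a b :=
    LipschitzOnWith.absolutelyContinuousOnInterval
      (φ.lipschitz.comp_lipschitzOnWith (by rwa [uIcc_of_le hab]))
  have hderiv : ∀ᵐ u, u ∈ uIoc a b → ‖deriv (φ ∘ f) u‖ ≤ L := by
    filter_upwards [hd] with u hu hmem
    obtain ⟨l, hl, hlL⟩ := hu (Ioc_subset_Icc_self (by rwa [uIoc_of_le hab] at hmem))
    rw [(φ.hasFDerivAt.comp_hasDerivAt u hl).deriv]
    calc ‖φ l‖ ≤ ‖φ‖ * ‖l‖ := φ.le_opNorm l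
      _ ≤ 1 * ‖l‖ := by gcongr
      _ ≤ L := by linarith
  calc ‖f b - f a‖ = ∫ u in a..b, deriv (φ ∘ f) u := by
        rw [hφac.integral_deriv_eq_sub, Function.comp_apply, Function.comp_apply, ← map_sub, hφf]
        rfl
    _ ≤ ‖∫ u in a..b, deriv (φ ∘ f) u‖ := Real.le_norm_self _
    _ ≤ L * |b - a| := intervalIntegral.norm_integral_le_of_norm_le_const_ae hderiv
    _ = L * (b - a) := by rw [abs_of_nonneg (sub_nonneg.2 hab)]

theorem norm_sub_le_mul_abs_of_ae_hasDerivAt_norm_le {L : ℝ}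
    (hf : LipschitzOnWith K f (Icc a b))
    (hd : ∀ᵐ u, u ∈ Icc a b → ∃ l, HasDerivAt f l u ∧ ‖l‖ ≤ L) :
    ∀ s ∈ Icc a b, ∀ t ∈ Icc a b, ‖f s - f t‖ ≤ L * |s - t| := by
  have key : ∀ s ∈ Icc a b, ∀ t ∈ Icc a b, s ≤ t → ‖f t - f s‖ ≤ L * (t - s) :=
    fun s hs t ht hst => by
      have hsub : Icc s t ⊆ Icc a b := Icc_subset_Icc hs.1 ht.2
      exact norm_sub_le_of_ae_hasDerivAt_norm_le hst (hf.mono hsub)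
        (by filter_upwards [hd] with u hu hmem using hu (hsub hmem))
  intro s hs t ht
  rcases le_total s t with hst | hts
  · rw [norm_sub_rev, abs_sub_comm, abs_of_nonneg (sub_nonneg.2 hst)]
    exact key s hs t ht hst
  · rw [abs_of_nonneg (sub_nonneg.2 hts)]
    exact key t ht s hs hts

theorem norm_le_of_ae_hasDerivAt_norm_le_affine {c D : ℝ} (hab : a ≤ b) (hc : 0 ≤ c)
    (hD : 0 ≤ D) (hcab : c * (b - a) ≤ 1 / 2) (hf : LipschitzOnWith K f (Icc a b))
    (hd : ∀ᵐ u, u ∈ Icc a b → ∃ l, HasDerivAt f l u ∧ ‖l‖ ≤ c * ‖f u‖ + D) :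
    ‖f b‖ ≤ 2 * (‖f a‖ + D * (b - a)) := by
  obtain ⟨t, ht, hmax⟩ := isCompact_Icc.exists_isMaxOn (nonempty_Icc.2 hab)
    hf.continuousOn.norm
  set S := ‖f t‖
  have hincr : ‖f t - f a‖ ≤ (c * S + D) * |t - a| := by
    refine norm_sub_le_mul_abs_of_ae_hasDerivAt_norm_le hf ?_ t ht a (left_mem_Icc.2 hab)
    filter_upwards [hd] with u hu hmem
    obtain ⟨l, hl, hlb⟩ := hu hmem
    exact ⟨l, hl, hlb.trans (by gcongr; exact hmax hmem)⟩
  have hta : |t - a| ≤ b - a := by rw [abs_of_nonneg (by linarith [ht.1])]; linarith [ht.2]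
  have hS : S ≤ ‖f a‖ + (c * S + D) * (b - a) :=
    calc S ≤ ‖f a‖ + ‖f t - f a‖ := norm_le_norm_add_norm_sub' _ _
      _ ≤ ‖f a‖ + (c * S + D) * (b - a) := by
          gcongr
          exact hincr.trans (by gcongr)
  have : c * S * (b - a) ≤ S / 2 := by nlinarith [norm_nonneg (f t)]
  calc ‖f b‖ ≤ S := hmax (right_mem_Icc.2 hab)
    _ ≤ 2 * (‖f a‖ + D * (b - a)) := by nlinarith

end DerivativeBounds

theorem norm_le_iterate_of_step {F : Type*} [Norm F] {x : ℝ → F} {Φ : ℝ → ℝ}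
    {a b c ℓ B₀ : ℝ} (hΦ : ∀ B, B ≤ Φ B) (hℓ : 0 ≤ ℓ) (h₀ : ∀ s ∈ Icc a b, ‖x s‖ ≤ B₀)
    (hstep : ∀ u B, b ≤ u → u ≤ c → (∀ s ∈ Icc a u, ‖x s‖ ≤ B) →
      ∀ s ∈ Icc u (u + ℓ), s ≤ c → ‖x s‖ ≤ Φ B) (k : ℕ) :
    ∀ s ∈ Icc a (b + k * ℓ), s ≤ c → ‖x s‖ ≤ Φ^[k] B₀ := by
  induction k with
  | zero => simpa using fun s hs _ => h₀ s hs
  | succ k ih =>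
    intro s hs hsc
    rw [Function.iterate_succ_apply']
    rcases le_or_gt s (b + k * ℓ) with hsk | hks
    · exact (ih s ⟨hs.1, hsk⟩ hsc).trans (hΦ _)
    refine hstep (b + k * ℓ) _ (by nlinarith [k.cast_nonneg (α := ℝ)]) (by linarith)
      (fun r hr => ih r hr (by linarith [hr.2])) s ⟨hks.le, ?_⟩ hsc
    push_cast at hs
    linarith [hs.2]

theorem CondG.exists_norm_le {n I : ℕ} {h : ℝ} {g : ℝ → E n → E n} (hg : CondG I h g) (B : ℝ) :
    ∃ M, 0 ≤ M ∧ ∀ t ∈ Icc (0:ℝ) ((I:ℝ) * h), ∀ v : E n, ‖v‖ ≤ B → ‖g t v‖ ≤ M := by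
  obtain ⟨C, hC⟩ := (isCompact_Icc.prod (isCompact_closedBall (0 : E n) B))
    |>.exists_bound_of_continuousOn (hg.continuousOn.mono (prod_mono subset_rfl (subset_univ _)))
  exact ⟨max C 0, le_max_right _ _, fun t ht v hv =>
    (hC (t, v) ⟨ht, mem_closedBall_zero_iff.2 hv⟩).trans (le_max_left _ _)⟩

section Trajectories

variable {n I : ℕ} {h : ℝ} {g : ℝ → E n → E n}

theorem norm_le_of_delayed_step {x : ℝ → E n} {a b c η ℓ B M : ℝ} {K : NNReal} (hab : a ≤ b)
    (hc : 0 ≤ c) (hη : 0 ≤ η) (hcℓ : c * ℓ ≤ 1 / 2) (hbℓ : b - a ≤ ℓ) (hℓh : ℓ ≤ h)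
    (hy : LipschitzOnWith K (fun t => x t - g t (x (t - h))) (Icc a b))
    (hd : ∀ᵐ u, u ∈ Icc a b → ∃ l ∈ Fset c η (x u) (x (u - h)),
      HasDerivAt (fun t => x t - g t (x (t - h))) l u)
    (hpast : ∀ s ∈ Icc (a - h) a, ‖x s‖ ≤ B)
    (hg : ∀ u ∈ Icc a b, ∀ v, ‖v‖ ≤ B → ‖g u v‖ ≤ M) :
    ‖x b‖ ≤ 2 * (B + M + (c * (1 + M + B) + η) * ℓ) + M := by
  have hdelay : ∀ u ∈ Icc a b, ‖x (u - h)‖ ≤ B := fun u hu =>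
    hpast _ ⟨by linarith [hu.1], by linarith [hu.2]⟩
  have hgB : ∀ u ∈ Icc a b, ‖g u (x (u - h))‖ ≤ M := fun u hu => hg u hu _ (hdelay u hu)
  have hx : ∀ u ∈ Icc a b, ‖x u‖ ≤ ‖x u - g u (x (u - h))‖ + M := fun u hu =>
    (norm_le_norm_add_norm_sub' (x u) (g u (x (u - h)))).trans (by linarith [hgB u hu])
  have ha : a ∈ Icc a b := left_mem_Icc.2 hab
  have hB : 0 ≤ B := (norm_nonneg _).trans (hdelay a ha)
  have hM : 0 ≤ M := (norm_nonneg _).trans (hgB a ha)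
  have hy_b := norm_le_of_ae_hasDerivAt_norm_le_affine (D := c * (1 + M + B) + η) hab hc
    (by positivity) (by nlinarith) hy (by
      filter_upwards [hd] with u hu hmem
      obtain ⟨l, hl, hderiv⟩ := hu hmem
      refine ⟨l, hderiv, hl.trans ?_⟩
      nlinarith [hx u hmem, hdelay u hmem])
  have hy_a : ‖x a - g a (x (a - h))‖ ≤ B + M :=
    (norm_sub_le _ _).trans (add_le_add (hpast a ⟨by linarith, le_rfl⟩) (hgB a ha))
  have : (c * (1 + M + B) + η) * (b - a) ≤ (c * (1 + M + B) + η) * ℓ := by gcongr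
  linarith [hx b (right_mem_Icc.2 hab)]

theorem InLambda.norm_le_of_inP {τ α : ℝ} {z : E n} {w x : ℝ → E n}
    (hx : InLambda I h τ z w x) (hzw : InP h α z w) : ∀ s ∈ Icc (τ - h) τ, ‖x s‖ ≤ α := by
  intro s hs
  rcases hs.2.eq_or_lt with rfl | hlt
  · rw [hx.2.1]
    exact hzw.2.1
  · rw [hx.2.2 s ⟨hs.1, hlt⟩]
    exact (norm_le_normInf hzw.1 ⟨by linarith [hs.1], by linarith⟩).trans hzw.2.2

theorem exists_norm_le_of_inX (hh : 0 < h) (hg : CondG I h g) {cH η α : ℝ} (hcH : 0 < cH)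
    (hη : 0 ≤ η) (hα : 0 < α) :
    ∃ B > 0, ∀ τ ∈ Icc (0:ℝ) ((I:ℝ) * h), ∀ (z : E n) (w : ℝ → E n), InP h α z w →
      ∀ x, InX I h g cH η τ z w x → ∀ s ∈ Icc (τ - h) ((I:ℝ) * h), ‖x s‖ ≤ B := by
  choose M _ hM using hg.exists_norm_le
  -- step length: at most the delay, and short enough for the affine estimate
  set ℓ := min h (1 / (2 * cH))
  have hℓ : 0 < ℓ := lt_min hh (by positivity)
  have hcℓ : cH * ℓ ≤ 1 / 2 :=
    calc cH * ℓ ≤ cH * (1 / (2 * cH)) := by gcongr; exact min_le_right _ _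
      _ = 1 / 2 := by field_simp
  set Φ : ℝ → ℝ := fun B => max B (2 * (B + M B + (cH * (1 + M B + B) + η) * ℓ) + M B)
  set N := ⌈(I:ℝ) * h / ℓ⌉₊
  refine ⟨Φ^[N] α, hα.trans_le (Function.id_le_iterate_of_id_le (fun B => le_max_left _ _) N α),
    fun τ hτ z w hzw x ⟨hΛ, ⟨K, hK⟩, hae⟩ s hs => ?_⟩
  have hNℓ : (I:ℝ) * h ≤ N * ℓ := (div_le_iff₀ hℓ).1 (Nat.le_ceil _)
  refine norm_le_iterate_of_step (fun B => le_max_left _ _) hℓ.le (hΛ.norm_le_of_inP hzw) ?_ N s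
    ⟨hs.1, by linarith [hs.2, hτ.1]⟩ hs.2
  intro u B hτu huϑ hpast r hr hrϑ
  refine (norm_le_of_delayed_step hr.1 hcH.le hη hcℓ (by linarith [hr.2]) (min_le_left _ _)
    (hK.mono (Icc_subset_Icc hτu hrϑ)) ?_ (fun s hs => hpast s ⟨by linarith [hs.1], hs.2⟩)
    (fun v hv => hM B v ⟨by linarith [hτ.1, hv.1], hv.2.trans hrϑ⟩)).trans (le_max_right _ _)
  filter_upwards [hae] with v hv hmem using hv ⟨hτu.trans hmem.1, hmem.2.trans hrϑ⟩

end Trajectories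

theorem bounds_for_inclusion_trajectories_general
    {n : ℕ} (I : ℕ) (h : ℝ) (hh : 0 < h)
    (g : ℝ → E n → E n) (hg : CondG I h g) (cH : ℝ) (hcH : 0 < cH) :
    ∀ α > 0, ∃ αX > 0, ∃ αXs > 0, ∃ lamXs > 0,
      ∀ τ ∈ Set.Icc (0:ℝ) ((I:ℝ) * h), ∀ (z : E n) (w : ℝ → E n), InP h α z w →
        ∀ x : ℝ → E n, InX I h g cH 1 τ z w x →
          (∀ t ∈ Set.Icc τ ((I:ℝ) * h),
            InP h αX (x t) (shift x t) ∧ ‖x t - g t (x (t - h))‖ ≤ αXs) ∧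
          (∀ t ∈ Set.Icc τ ((I:ℝ) * h), ∀ t' ∈ Set.Icc τ ((I:ℝ) * h),
            ‖(x t - g t (x (t - h))) - (x t' - g t' (x (t' - h)))‖ ≤
              lamXs * |t - t'|) := by
  intro α hα
  obtain ⟨αX, hαX, hxB⟩ := exists_norm_le_of_inX hh hg hcH zero_le_one hα
  obtain ⟨M, hM0, hM⟩ := hg.exists_norm_le αX
  refine ⟨αX, hαX, αX + M, by positivity, cH * (1 + 2 * αX) + 1, by positivity,
    fun τ hτ z w hzw x hx => ?_⟩
  have hxα := hxB τ hτ z w hzw x hx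
  obtain ⟨⟨hxpl, -, -⟩, ⟨K, hK⟩, hae⟩ := hx
  have hnow : ∀ t ∈ Icc τ ((I:ℝ) * h), ‖x t‖ ≤ αX :=
    fun t ht => hxα t ⟨by linarith [ht.1], ht.2⟩
  have hpast : ∀ t ∈ Icc τ ((I:ℝ) * h), ‖x (t - h)‖ ≤ αX :=
    fun t ht => hxα _ ⟨by linarith [ht.1], by linarith [ht.2]⟩
  refine ⟨fun t ht => ⟨⟨?_, hnow t ht, ?_⟩, ?_⟩, ?_⟩
  · have hshift := (hxpl.mono (c := t - h) (by linarith [ht.1]) (by linarith) ht.2).comp_add_left t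
    rwa [sub_sub_cancel_left, sub_self] at hshift
  · exact normInf_le hh fun ξ hξ => hxα _ ⟨by linarith [hξ.1, ht.1], by linarith [hξ.2, ht.2]⟩
  · exact (norm_sub_le _ _).trans
      (add_le_add (hnow t ht) (hM t ⟨hτ.1.trans ht.1, ht.2⟩ _ (hpast t ht)))
  · refine norm_sub_le_mul_abs_of_ae_hasDerivAt_norm_le hK ?_
    filter_upwards [hae] with u hu hmem
    obtain ⟨l, hl, hderiv⟩ := hu hmem
    exact ⟨l, hderiv, hl.trans (by nlinarith [hnow u hmem, hpast u hmem])⟩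

/-- Lemma `lem:alpha_x_lambda_x`: uniform bounds and a uniform Lipschitz constant for
trajectories of the differential inclusion and for `y(t) = x(t) - g(t,x(t-h))`. -/
theorem bounds_for_inclusion_trajectories
    {n : ℕ} (hn : 1 ≤ n) (I : ℕ) (hI : 1 ≤ I) (h : ℝ) (hh : 0 < h)
    (g : ℝ → E n → E n) (hg : CondG I h g) (cH : ℝ) (hcH : 0 < cH) :
    ∀ α > 0, ∃ αX > 0, ∃ αXs > 0, ∃ lamXs > 0,
      ∀ τ ∈ Set.Icc (0:ℝ) ((I:ℝ) * h), ∀ (z : E n) (w : ℝ → E n), InP h α z w →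
        ∀ x : ℝ → E n, InX I h g cH 1 τ z w x →
          (∀ t ∈ Set.Icc τ ((I:ℝ) * h),
            InP h αX (x t) (shift x t) ∧ ‖x t - g t (x (t - h))‖ ≤ αXs) ∧
          (∀ t ∈ Set.Icc τ ((I:ℝ) * h), ∀ t' ∈ Set.Icc τ ((I:ℝ) * h),
            ‖(x t - g t (x (t - h))) - (x t' - g t' (x (t' - h)))‖ ≤
              lamXs * |t - t'|) :=
  bounds_for_inclusion_trajectories_general I h hh g hg cH hcH
end
end
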